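/- Let (G, l) be a finite labelled graph. The maximal core subgraph of a subgraph H ∈ X(G,l) can be obtained from H by repeatedly removing leaves whose valence-one endpoint is unlabelled, and the assignment H ↦ (maximal core subgraph of H) defines an order-preserving map from the poset X(G,l) of proper subgraphs having a component with non-trivial fundamental group or at least two labelled vertices, to the poset C(G,l) of proper core subgraphs; this map restricts to the identity on C(G,l) and satisfies H ⊇ f(H). Consequently the order complex of X(G,l) deformation retracts to the order complex of C(G,l). -/

import Mathlib

open scoped Classical

noncomputable section

universe u v

/-- An abstract simplicial complex on a vertex type `V`, given by its set of
faces (finite subsets of `V`), closed under taking subsets. -/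
structure AbsSC (V : Type u) where
  faces : Set (Finset V)
  down_closed : ∀ s ∈ faces, ∀ t ⊆ s, t ∈ faces

namespace AbsSC

/-- The geometric realization of an abstract simplicial complex: the space of
convex-combination functions supported on a face of the complex. -/
def realization {V : Type u} (K : AbsSC V) : Type u :=
  {f : V → ℝ // ∃ s ∈ K.faces, (∀ v ∉ s, f v = 0) ∧ (∀ v, 0 ≤ f v) ∧ ∑ v ∈ s, f v = 1}

instance {V : Type u} (K : AbsSC V) : TopologicalSpace (realization K) :=
  inferInstanceAs (TopologicalSpace {_f : V → ℝ // _})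

end AbsSC

/-- The order complex of a poset: its simplices are the finite chains. -/
def orderComplex (X : Type u) [Preorder X] : AbsSC X where
  faces := {s | IsChain (· ≤ ·) (↑s : Set X)}
  down_closed := fun _s hs _t hts => hs.mono (Finset.coe_subset.mpr hts)

/-- A finite multigraph (loops and multiple edges allowed): a finite vertex
type, a finite edge type and an endpoint map assigning to each edge an
unordered pair of vertices. -/
structure MGraph where
  V : Type
  E : Type
  [fV : Fintype V]
  [fE : Fintype E]
  ends : E → Sym2 V

attribute [instance] MGraph.fV MGraph.fE

namespace MGraph

variable (G : MGraph)

/-- The valence of a vertex `v` in the (edge-induced) subgraph `H` of `G`: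
the number of half-edges of `H` adjacent to `v` (a loop counts twice). -/
def valence (H : Finset G.E) (v : G.V) : ℕ :=
  ∑ e ∈ H, (if G.ends e = Sym2.diag v then 2 else if v ∈ G.ends e then 1 else 0)

/-- `v` is a vertex of the edge-induced subgraph `H`. -/
def vertexIn (H : Finset G.E) (v : G.V) : Prop := ∃ e ∈ H, v ∈ G.ends e

/-- Two vertices of `G` are connected by an edge path within the subgraph `H`. -/
def vconn (H : Finset G.E) : G.V → G.V → Prop :=
  Relation.ReflTransGen (fun a b => ∃ e ∈ H, G.ends e = s(a, b))

/-- The graph `G` is connected. -/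
def Conn : Prop := ∀ u v : G.V, G.vconn Finset.univ u v

/-- `G` has no isolated vertices. -/
def NoIsolated : Prop := ∀ v : G.V, ∃ e : G.E, v ∈ G.ends e

/-- The subgraph `H` has a connected component with non-trivial fundamental
group, i.e. `H` contains a cycle: equivalently, `H` contains a non-empty edge
subset in which no vertex has valence one. -/
def hasCycle (H : Finset G.E) : Prop :=
  ∃ S : Finset G.E, S ⊆ H ∧ S.Nonempty ∧ ∀ v, G.valence S v ≠ 1

/-- Defining condition of the poset `X(G,l)`: the subgraph `H` has a connected
component with non-trivial fundamental group, or a connected component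
containing at least two labelled vertices. -/
def inX (l : Finset G.V) (H : Finset G.E) : Prop :=
  G.hasCycle H ∨ ∃ u v, u ∈ l ∧ v ∈ l ∧ u ≠ v ∧ G.vconn H u v

/-- The poset `X(G,l)` of proper subgraphs of `G` having a connected component
with non-trivial fundamental group or with at least two labelled vertices,
ordered by inclusion. -/
def XP (l : Finset G.V) : Type :=
  {H : Finset G.E // H ⊂ Finset.univ ∧ G.inX l H}

instance (l : Finset G.V) : PartialOrder (G.XP l) :=
  inferInstanceAs (PartialOrder {_H : Finset G.E // _})

/-- A core subgraph of the labelled graph `(G,l)`: a non-empty subgraph in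
which every vertex of valence one is labelled. -/
def IsCore (l : Finset G.V) (H : Finset G.E) : Prop :=
  H.Nonempty ∧ ∀ v, G.valence H v = 1 → v ∈ l

/-- The edge `e` is separating: removing an interior point of `e` disconnects
`G`; combinatorially, `e` is not a loop and its two endpoints are not connected
in the graph with `e` deleted (in particular, leaves are separating). -/
def Separating (e : G.E) : Prop :=
  ∀ a b, G.ends e = s(a, b) → ¬ G.vconn (Finset.univ.erase e) a b

/-- The edge `e` of `(G,l)` is `l`-separating: it is separating, one of the
components of `G` minus the interior of `e` contains all labelled vertices, and
`G` with `e` deleted satisfies the defining condition of `X(G,l)`. -/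
def LSep (l : Finset G.V) (e : G.E) : Prop :=
  G.Separating e ∧
  (∃ a, a ∈ G.ends e ∧ ∀ u ∈ l, G.vconn (Finset.univ.erase e) a u) ∧
  G.inX l (Finset.univ.erase e)

end MGraph

/-- `A` is a deformation retract of the ambient space `Z`: there is a
retraction of `Z` onto `A` that is homotopic to the identity of `Z`. -/
def IsDeformationRetractOf {Z : Type u} [TopologicalSpace Z] (A : Set Z) : Prop :=
  ∃ r : C(Z, Z), Set.range ⇑r ⊆ A ∧ (∀ a ∈ A, r a = a) ∧
    (ContinuousMap.id Z).Homotopic r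

/-!
Every `H ∈ X(G,l)` contains a core subgraph: a leafless witness of a cycle is one, and pruning
unlabelled leaves from a subgraph joining two labelled vertices leaves one. Cores are closed
under unions, since a leaf of a union is a leaf of the core containing its edge; so `H` has a
largest core `f(H)`, monotone in `H`. Conversely a core lies in `X(G,l)`: without leaves it is
its own cycle witness; otherwise delete a (labelled) leaf `w` and label its neighbour `x`, which
gives a smaller core, and a labelled pair joined in it yields one in the original after
replacing `x` by `w`.

As `f` is monotone with `f ≤ id`, the simplicial map it induces on the order complex is
homotopic to the identity through a prism homotopy: the mass of a point at `p` is moved to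
`f p`, one vertex after another in the order of a linear extension. Vertices still holding mass
lie above those already moved and `f p ≤ p`, so the support stays a chain. At the end the point
lies over `C(G,l)`, which `f` fixes.
-/

namespace MGraph

variable {G : MGraph}

def incidence (e : G.E) (v : G.V) : ℕ :=
  if G.ends e = Sym2.diag v then 2 else if v ∈ G.ends e then 1 else 0

lemma valence_eq_sum_incidence (H : Finset G.E) (v : G.V) :
    G.valence H v = ∑ e ∈ H, G.incidence e v :=
  rfl

lemma incidence_pos_iff {e : G.E} {v : G.V} : 0 < G.incidence e v ↔ v ∈ G.ends e := by
  unfold incidence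
  split_ifs with hd hv <;> simp_all [Sym2.diag]

lemma incidence_eq_one_iff {e : G.E} {v : G.V} :
    G.incidence e v = 1 ↔ ∃ x, v ≠ x ∧ G.ends e = s(v, x) := by
  unfold incidence
  constructor
  · intro h
    have hd : G.ends e ≠ Sym2.diag v := fun hd => by simp [hd] at h
    have hv : v ∈ G.ends e := by
      by_contra hv
      simp [hd, hv] at h
    obtain ⟨x, hx⟩ := Sym2.mem_iff_exists.1 hv
    exact ⟨x, fun hvx => hd (by rw [hx, ← hvx]; rfl), hx⟩
  · rintro ⟨x, hvx, hx⟩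
    have hd : ¬ s(v, x) = Sym2.diag v := by
      rw [Sym2.diag, Sym2.eq_iff]
      tauto
    simp [hd, hx]

lemma valence_mono {S T : Finset G.E} (h : S ⊆ T) (v : G.V) :
    G.valence S v ≤ G.valence T v :=
  Finset.sum_le_sum_of_subset h

lemma one_le_valence {S : Finset G.E} {e : G.E} {v : G.V} (he : e ∈ S) (hv : v ∈ G.ends e) :
    1 ≤ G.valence S v :=
  (incidence_pos_iff.2 hv).trans_le
    (Finset.single_le_sum (f := (G.incidence · v)) (fun _ _ => Nat.zero_le _) he)

lemma valence_erase_add {S : Finset G.E} {e : G.E} (he : e ∈ S) (v : G.V) :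
    G.valence (S.erase e) v + G.incidence e v = G.valence S v :=
  Finset.sum_erase_add _ _ he

lemma valence_eq_one_of_subset {S T : Finset G.E} (hST : S ⊆ T) {e : G.E} {v : G.V}
    (he : e ∈ S) (hv : v ∈ G.ends e) (hT : G.valence T v = 1) : G.valence S v = 1 :=
  le_antisymm (hT ▸ valence_mono hST v) (one_le_valence he hv)

lemma exists_leaf_of_valence_eq_one {S : Finset G.E} {w : G.V} (h : G.valence S w = 1) :
    ∃ e ∈ S, ∃ x, w ≠ x ∧ G.ends e = s(w, x) ∧
      ∀ f ∈ S, w ∈ G.ends f → f = e := by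
  have hsum : ∑ e ∈ S, G.incidence e w ≠ 0 := by
    rw [← valence_eq_sum_incidence, h]
    exact one_ne_zero
  obtain ⟨e, he, hne⟩ := Finset.exists_ne_zero_of_sum_ne_zero hsum
  have hrest := valence_erase_add he w
  rw [h] at hrest
  have hone : G.incidence e w = 1 := by omega
  obtain ⟨x, hwx, hx⟩ := incidence_eq_one_iff.1 hone
  refine ⟨e, he, x, hwx, hx, fun f hf hwf => by_contra fun hfe => ?_⟩
  have := one_le_valence (Finset.mem_erase.2 ⟨hfe, hf⟩) hwf
  omega

lemma vconn_mono {S T : Finset G.E} (h : S ⊆ T) {u v : G.V} (huv : G.vconn S u v) :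
    G.vconn T u v :=
  Relation.ReflTransGen.mono (fun _ _ ⟨e, he, hends⟩ => ⟨e, h he, hends⟩) _ _ huv

lemma vconn_symm {S : Finset G.E} {u v : G.V} (huv : G.vconn S u v) : G.vconn S v u := by
  have : Std.Symm fun a b => ∃ e ∈ S, G.ends e = s(a, b) :=
    ⟨fun _ _ ⟨e, he, hends⟩ => ⟨e, he, hends.trans Sym2.eq_swap⟩⟩
  exact Std.Symm.symm (r := Relation.ReflTransGen fun a b => ∃ e ∈ S, G.ends e = s(a, b))
    _ _ huv

lemma exists_mem_ends_of_vconn {S : Finset G.E} {u v : G.V} (huv : G.vconn S u v)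
    (hne : u ≠ v) : ∃ e ∈ S, u ∈ G.ends e := by
  rcases huv.cases_head with rfl | ⟨_, ⟨e, he, hends⟩, _⟩
  · exact absurd rfl hne
  · exact ⟨e, he, hends ▸ Sym2.mem_mk_left _ _⟩

lemma vconn_erase_leaf {S : Finset G.E} {e : G.E} {w x : G.V} (hx : G.ends e = s(w, x))
    (hleaf : ∀ f ∈ S, w ∈ G.ends f → f = e) {a b : G.V} (ha : a ≠ w) (hb : b ≠ w)
    (hab : G.vconn S a b) : G.vconn (S.erase e) a b := by
  -- collapsing `w` onto `x` turns every step of a walk in `S` into a step in `S.erase e`,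
  -- or into no step at all
  let g : G.V → G.V := fun c => if c = w then x else c
  have hstep : ∀ c d, (∃ f ∈ S, G.ends f = s(c, d)) → G.vconn (S.erase e) (g c) (g d) := by
    rintro c d ⟨f, hf, hends⟩
    by_cases hfe : f = e
    · subst hfe
      rw [hx, Sym2.eq_iff] at hends
      rcases hends with ⟨rfl, rfl⟩ | ⟨rfl, rfl⟩ <;>
        simp only [g, if_pos rfl, ite_self] <;> exact Relation.ReflTransGen.refl
    · have hc : c ≠ w := fun hcw => hfe (hleaf f hf (by simp [hends, hcw]))
      have hd : d ≠ w := fun hdw => hfe (hleaf f hf (by simp [hends, hdw]))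
      simp only [g, if_neg hc, if_neg hd]
      exact Relation.ReflTransGen.single ⟨f, Finset.mem_erase.2 ⟨hfe, hf⟩, hends⟩
  have := (hab.lift' g hstep : G.vconn (S.erase e) (g a) (g b))
  simp only [Function.onFun, g, if_neg ha, if_neg hb] at this
  exact this

variable {l : Finset G.V}

lemma exists_isCore_subset_of_vconn {u v : G.V} (hu : u ∈ l) (hv : v ∈ l) (huv : u ≠ v)
    {S : Finset G.E} (hS : G.vconn S u v) : ∃ T ⊆ S, G.IsCore l T := by
  induction S using Finset.strongInduction with
  | H S ih =>
  by_cases hcore : ∀ z, G.valence S z = 1 → z ∈ l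
  · obtain ⟨e, he, -⟩ := exists_mem_ends_of_vconn hS huv
    exact ⟨S, subset_rfl, ⟨e, he⟩, hcore⟩
  push Not at hcore
  obtain ⟨z, hz, hzl⟩ := hcore
  obtain ⟨e, he, x, -, hx, hleaf⟩ := exists_leaf_of_valence_eq_one hz
  have hS' := vconn_erase_leaf hx hleaf (ne_of_mem_of_not_mem hu hzl)
    (ne_of_mem_of_not_mem hv hzl) hS
  obtain ⟨T, hT, hTcore⟩ := ih _ (Finset.erase_ssubset he) hS'
  exact ⟨T, hT.trans (Finset.erase_subset _ _), hTcore⟩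

lemma exists_isCore_subset_of_inX {H : Finset G.E} (h : G.inX l H) :
    ∃ M ⊆ H, G.IsCore l M := by
  rcases h with ⟨S, hS, hne, hval⟩ | ⟨u, v, hu, hv, huv, hconn⟩
  · exact ⟨S, hS, hne, fun v hv => absurd hv (hval v)⟩
  · exact exists_isCore_subset_of_vconn hu hv huv hconn

lemma isCore_erase_leaf {H : Finset G.E} {e : G.E} {w x : G.V} (he : e ∈ H)
    (hx : G.ends e = s(w, x)) (hleaf : ∀ f ∈ H, w ∈ G.ends f → f = e) (hH : G.IsCore l H)
    (hne : (H.erase e).Nonempty) : G.IsCore (insert x l) (H.erase e) := by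
  refine ⟨hne, fun v hv => ?_⟩
  rcases eq_or_ne v x with rfl | hvx
  · exact Finset.mem_insert_self _ _
  have hvw : v ≠ w := by
    rintro rfl
    obtain ⟨f, hf, y, -, hfy, -⟩ := exists_leaf_of_valence_eq_one hv
    exact (Finset.mem_erase.1 hf).1
      (hleaf f (Finset.mem_of_mem_erase hf) (hfy ▸ Sym2.mem_mk_left v y))
  have hve : G.incidence e v = 0 := by
    by_contra hpos
    have := incidence_pos_iff.1 (Nat.pos_of_ne_zero hpos)
    rw [hx, Sym2.mem_iff] at this
    tauto
  have := valence_erase_add he v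
  rw [hv, hve] at this
  exact Finset.mem_insert_of_mem (hH.2 v this.symm)

lemma inX_of_inX_insert_erase_leaf {H : Finset G.E} {e : G.E} {w x : G.V} (he : e ∈ H)
    (hwx : w ≠ x) (hx : G.ends e = s(w, x)) (hleaf : ∀ f ∈ H, w ∈ G.ends f → f = e)
    (hw : w ∈ l) (h : G.inX (insert x l) (H.erase e)) : G.inX l H := by
  have hsub : H.erase e ⊆ H := Finset.erase_subset _ _
  have hpair : ∀ c ∈ l, G.vconn (H.erase e) x c → G.inX l H := by
    intro c hc hxc
    have hcw : c ≠ w := by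
      rintro rfl
      obtain ⟨f, hf, hcf⟩ := exists_mem_ends_of_vconn (vconn_symm hxc) hwx
      exact (Finset.mem_erase.1 hf).1 (hleaf f (Finset.mem_of_mem_erase hf) hcf)
    exact Or.inr ⟨w, c, hw, hc, hcw.symm, .head ⟨e, he, hx⟩ (vconn_mono hsub hxc)⟩
  rcases h with ⟨S, hS, hne, hval⟩ | ⟨a, b, ha, hb, hab, hconn⟩
  · exact Or.inl ⟨S, hS.trans hsub, hne, hval⟩
  rcases Finset.mem_insert.1 ha with rfl | hal <;> rcases Finset.mem_insert.1 hb with rfl | hbl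
  · exact absurd rfl hab
  · exact hpair b hbl hconn
  · exact hpair a hal (vconn_symm hconn)
  · exact Or.inr ⟨a, b, hal, hbl, hab, vconn_mono hsub hconn⟩

theorem inX_of_isCore {H : Finset G.E} (hH : G.IsCore l H) : G.inX l H := by
  induction H using Finset.strongInduction generalizing l with
  | H H ih =>
  by_cases hleafless : ∀ w, G.valence H w ≠ 1
  · exact Or.inl ⟨H, subset_rfl, hH.1, hleafless⟩
  push Not at hleafless
  obtain ⟨w, hw⟩ := hleafless
  obtain ⟨e, he, x, hwx, hx, hleaf⟩ := exists_leaf_of_valence_eq_one hw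
  rcases (H.erase e).eq_empty_or_nonempty with hempty | hne
  · have hHe : H = {e} := by rw [← Finset.insert_erase he, hempty]; rfl
    have hxval : G.valence H x = 1 := by
      rw [hHe, valence_eq_sum_incidence, Finset.sum_singleton, incidence_eq_one_iff]
      exact ⟨w, hwx.symm, hx.trans Sym2.eq_swap⟩
    exact Or.inr ⟨w, x, hH.2 w hw, hH.2 x hxval, hwx, .single ⟨e, he, hx⟩⟩
  · exact inX_of_inX_insert_erase_leaf he hwx hx hleaf (hH.2 w hw)
      (ih _ (Finset.erase_ssubset he) (isCore_erase_leaf he hx hleaf hH hne))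

variable (G l) in
def maxCore (H : Finset G.E) : Finset G.E :=
  ({M ∈ H.powerset | G.IsCore l M}).sup id

lemma maxCore_subset (H : Finset G.E) : G.maxCore l H ⊆ H :=
  Finset.sup_le fun _ hM => Finset.mem_powerset.1 (Finset.mem_filter.1 hM).1

lemma subset_maxCore {H M : Finset G.E} (hMH : M ⊆ H) (hM : G.IsCore l M) :
    M ⊆ G.maxCore l H :=
  Finset.le_sup (f := id) (Finset.mem_filter.2 ⟨Finset.mem_powerset.2 hMH, hM⟩)

lemma maxCore_mono {H K : Finset G.E} (h : H ⊆ K) : G.maxCore l H ⊆ G.maxCore l K :=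
  Finset.sup_mono (Finset.filter_subset_filter _ (Finset.powerset_mono.2 h))

lemma maxCore_eq_self {H : Finset G.E} (hH : G.IsCore l H) : G.maxCore l H = H :=
  (maxCore_subset H).antisymm (subset_maxCore subset_rfl hH)

lemma isCore_maxCore {H : Finset G.E} (hex : ∃ M ⊆ H, G.IsCore l M) :
    G.IsCore l (G.maxCore l H) := by
  obtain ⟨M, hMH, hM⟩ := hex
  refine ⟨hM.1.mono (subset_maxCore hMH hM), fun v hv => ?_⟩
  obtain ⟨e, he, x, -, hx, -⟩ := exists_leaf_of_valence_eq_one hv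
  obtain ⟨S, hS, heS⟩ := Finset.mem_sup.1 he
  obtain ⟨hSH, hScore⟩ := Finset.mem_filter.1 hS
  exact hScore.2 v (valence_eq_one_of_subset (subset_maxCore (Finset.mem_powerset.1 hSH) hScore)
    heS (hx ▸ Sym2.mem_mk_left v x) hv)

end MGraph

namespace AbsSC.realization

variable {V : Type u} {K : AbsSC V}

lemma nonneg (φ : K.realization) (v : V) : 0 ≤ φ.1 v := by
  obtain ⟨_, _, _, hpos, _⟩ := φ.2
  exact hpos v

lemma sum_eq_one [Fintype V] (φ : K.realization) : ∑ v, φ.1 v = 1 := by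
  obtain ⟨s, _, hzero, _, hsum⟩ := φ.2
  exact (Finset.sum_subset (Finset.subset_univ s) fun v _ hv => hzero v hv).symm.trans hsum

lemma le_total_of_ne_zero {P : Type u} [Preorder P] (φ : (orderComplex P).realization)
    {p q : P} (hp : φ.1 p ≠ 0) (hq : φ.1 q ≠ 0) : p ≤ q ∨ q ≤ p := by
  obtain ⟨s, hs, hzero, _, _⟩ := φ.2
  have hps : p ∈ s := by_contra fun h => hp (hzero p h)
  have hqs : q ∈ s := by_contra fun h => hq (hzero q h)
  rcases eq_or_ne p q with rfl | hne
  · exact Or.inl le_rfl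
  · exact hs hps hqs hne

end AbsSC.realization

lemma toLinearExtension_strictMono {P : Type u} [PartialOrder P] :
    StrictMono (toLinearExtension (α := P)) :=
  toLinearExtension.monotone.strictMono_of_injective fun _ _ h => h

namespace orderComplex

variable {P : Type u} [PartialOrder P] [Fintype P]

def massBelow (φ : P → ℝ) (p : P) : ℝ :=
  ∑ q with toLinearExtension q < toLinearExtension p, φ q

/-- The part of the mass of `φ` at `p` that has been moved by time `t`; the masses are moved
one after the other, in the order of the linear extension, at unit speed. -/
def transferred (φ : P → ℝ) (t : ℝ) (p : P) : ℝ :=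
  max 0 (min (φ p) (t - massBelow φ p))

/-- The prism homotopy from `φ` (at `t = 0`) to its push-forward along `f` (at `t = 1`). -/
def prism (f : P → P) (φ : P → ℝ) (t : ℝ) (q : P) : ℝ :=
  φ q - transferred φ t q + ∑ p with f p = q, transferred φ t p

variable {φ : P → ℝ} {t : ℝ}

lemma massBelow_add_self (p : P) :
    massBelow φ p + φ p = ∑ q with toLinearExtension q ≤ toLinearExtension p, φ q := by
  have : Finset.univ.filter (fun q => toLinearExtension q ≤ toLinearExtension p) =
      insert p (Finset.univ.filter fun q => toLinearExtension q < toLinearExtension p) := by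
    ext q
    simp only [Finset.mem_filter, Finset.mem_insert, Finset.mem_univ, true_and, le_iff_lt_or_eq]
    exact or_comm
  rw [this, Finset.sum_insert (by simp), massBelow, add_comm]

lemma massBelow_add_le_massBelow (hφ : ∀ p, 0 ≤ φ p) {p q : P}
    (h : toLinearExtension p < toLinearExtension q) : massBelow φ p + φ p ≤ massBelow φ q := by
  rw [massBelow_add_self]
  refine Finset.sum_le_sum_of_subset_of_nonneg (fun r hr => ?_) fun r _ _ => hφ r
  exact Finset.mem_filter.2 ⟨Finset.mem_univ r, (Finset.mem_filter.1 hr).2.trans_lt h⟩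

lemma massBelow_add_le_sum (hφ : ∀ p, 0 ≤ φ p) (p : P) :
    massBelow φ p + φ p ≤ ∑ q, φ q := by
  rw [massBelow_add_self]
  exact Finset.sum_le_sum_of_subset_of_nonneg (Finset.subset_univ _) fun r _ _ => hφ r

lemma transferred_nonneg (p : P) : 0 ≤ transferred φ t p :=
  le_max_left _ _

lemma transferred_le (hφ : ∀ p, 0 ≤ φ p) (p : P) : transferred φ t p ≤ φ p :=
  max_le (hφ p) (min_le_left _ _)

lemma transferred_zero (hφ : ∀ p, 0 ≤ φ p) (p : P) : transferred φ 0 p = 0 :=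
  max_eq_left <| (min_le_right _ _).trans <|
    sub_nonpos.2 (Finset.sum_nonneg fun q _ => hφ q)

lemma transferred_one (hφ : ∀ p, 0 ≤ φ p) (hsum : ∑ q, φ q = 1) (p : P) :
    transferred φ 1 p = φ p := by
  have : φ p ≤ 1 - massBelow φ p := by linarith [massBelow_add_le_sum hφ p]
  rw [transferred, min_eq_left this, max_eq_right (hφ p)]

lemma massBelow_lt_of_transferred_ne_zero {p : P} (h : transferred φ t p ≠ 0) :
    φ p ≠ 0 ∧ massBelow φ p < t := by
  have : 0 < min (φ p) (t - massBelow φ p) := by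
    by_contra hle
    exact h (max_eq_left (not_lt.1 hle))
  rw [lt_min_iff, sub_pos] at this
  exact ⟨this.1.ne', this.2⟩

lemma lt_massBelow_add_of_transferred_ne (hφ : ∀ p, 0 ≤ φ p) {p : P}
    (h : transferred φ t p ≠ φ p) : φ p ≠ 0 ∧ t < massBelow φ p + φ p := by
  refine ⟨fun h0 => h ?_, lt_of_not_ge fun hle => h ?_⟩
  · exact le_antisymm (transferred_le hφ p) (h0 ▸ transferred_nonneg p)
  rw [transferred, min_eq_left (by linarith), max_eq_right (hφ p)]

lemma le_of_transferred_ne_zero_of_transferred_ne (hφ : ∀ p, 0 ≤ φ p) {p q : P}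
    (hpq : p ≤ q ∨ q ≤ p) (hp : transferred φ t p ≠ 0) (hq : transferred φ t q ≠ φ q) :
    p ≤ q := by
  rcases hpq with hpq | hqp
  · exact hpq
  rcases hqp.eq_or_lt with rfl | hlt
  · exact le_rfl
  have := massBelow_add_le_massBelow hφ (toLinearExtension_strictMono hlt)
  linarith [(massBelow_lt_of_transferred_ne_zero hp).2,
    (lt_massBelow_add_of_transferred_ne hφ hq).2]

lemma prism_nonneg (f : P → P) (hφ : ∀ p, 0 ≤ φ p) (q : P) : 0 ≤ prism f φ t q :=
  add_nonneg (sub_nonneg.2 (transferred_le hφ q))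
    (Finset.sum_nonneg fun p _ => transferred_nonneg p)

lemma sum_prism (f : P → P) : ∑ q, prism f φ t q = ∑ q, φ q := by
  simp only [prism, Finset.sum_add_distrib, Finset.sum_sub_distrib,
    Finset.sum_fiberwise Finset.univ f (transferred φ t), sub_add_cancel]

lemma prism_zero (f : P → P) (hφ : ∀ p, 0 ≤ φ p) : prism f φ 0 = φ := by
  funext q
  simp [prism, transferred_zero hφ]

lemma prism_one (f : P → P) (hφ : ∀ p, 0 ≤ φ p) (hsum : ∑ q, φ q = 1) (q : P) :
    prism f φ 1 q = ∑ p with f p = q, φ p := by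
  simp [prism, transferred_one hφ hsum]

lemma prism_ne_zero {f : P → P} {q : P} (h : prism f φ t q ≠ 0) :
    transferred φ t q ≠ φ q ∨ ∃ p, f p = q ∧ transferred φ t p ≠ 0 := by
  by_contra! hc
  refine h ?_
  rw [prism, hc.1, Finset.sum_eq_zero fun p hp => hc.2 p (Finset.mem_filter.1 hp).2,
    sub_self, add_zero]

lemma isChain_prism_support {f : P → P} (hf : Monotone f) (hle : ∀ p, f p ≤ p)
    (φ : (orderComplex P).realization) (t : ℝ) :
    IsChain (· ≤ ·) {q | prism f φ.1 t q ≠ 0} := by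
  have hφ := φ.nonneg
  intro q₁ hq₁ q₂ hq₂ _
  rcases prism_ne_zero hq₁ with h₁ | ⟨p₁, rfl, h₁⟩ <;>
    rcases prism_ne_zero hq₂ with h₂ | ⟨p₂, rfl, h₂⟩
  · exact φ.le_total_of_ne_zero (lt_massBelow_add_of_transferred_ne hφ h₁).1
      (lt_massBelow_add_of_transferred_ne hφ h₂).1
  · refine Or.inr ((hle p₂).trans (le_of_transferred_ne_zero_of_transferred_ne hφ ?_ h₂ h₁))
    exact φ.le_total_of_ne_zero (massBelow_lt_of_transferred_ne_zero h₂).1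
      (lt_massBelow_add_of_transferred_ne hφ h₁).1
  · refine Or.inl ((hle p₁).trans (le_of_transferred_ne_zero_of_transferred_ne hφ ?_ h₁ h₂))
    exact φ.le_total_of_ne_zero (massBelow_lt_of_transferred_ne_zero h₁).1
      (lt_massBelow_add_of_transferred_ne hφ h₂).1
  · exact (φ.le_total_of_ne_zero (massBelow_lt_of_transferred_ne_zero h₁).1
      (massBelow_lt_of_transferred_ne_zero h₂).1).imp (fun h => hf h) (fun h => hf h)

def prismPoint {f : P → P} (hf : Monotone f) (hle : ∀ p, f p ≤ p)
    (φ : (orderComplex P).realization) (t : ℝ) : (orderComplex P).realization :=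
  ⟨prism f φ.1 t, Finset.univ.filter (prism f φ.1 t · ≠ 0), by
    simpa [orderComplex] using isChain_prism_support hf hle φ t,
    by simp, prism_nonneg f φ.nonneg,
    by rw [Finset.sum_filter_ne_zero, sum_prism, φ.sum_eq_one]⟩

lemma continuous_prismPoint {f : P → P} (hf : Monotone f) (hle : ∀ p, f p ≤ p) :
    Continuous fun x : unitInterval × (orderComplex P).realization =>
      prismPoint hf hle x.2 x.1 := by
  refine Continuous.subtype_mk (continuous_pi fun q => ?_) _
  have hcoord : ∀ p, Continuous fun x : unitInterval × (orderComplex P).realization => x.2.1 p :=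
    fun p => (continuous_apply p).comp (continuous_subtype_val.comp continuous_snd)
  simp only [prism, transferred, massBelow]
  fun_prop

end orderComplex

open orderComplex in
theorem isDeformationRetractOf_orderComplex_of_le_id {P : Type u} [PartialOrder P] [Fintype P]
    {f : P → P} (hf : Monotone f) (hle : ∀ p, f p ≤ p) {C : Set P} (hmem : ∀ p, f p ∈ C)
    (hfix : ∀ p ∈ C, f p = p) :
    IsDeformationRetractOf {φ : (orderComplex P).realization | ∀ p, φ.1 p ≠ 0 → p ∈ C} := by
  let H : C(unitInterval × (orderComplex P).realization, (orderComplex P).realization) :=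
    ⟨fun x => prismPoint hf hle x.2 x.1, continuous_prismPoint hf hle⟩
  refine ⟨H.curry 1, ?_, fun φ hφC => ?_, ⟨⟨H, fun φ => ?_, fun _ => rfl⟩⟩⟩
  · rintro _ ⟨φ, rfl⟩ q hq
    change prism f φ.1 1 q ≠ 0 at hq
    rw [prism_one f φ.nonneg φ.sum_eq_one] at hq
    obtain ⟨p, hp, -⟩ := Finset.exists_ne_zero_of_sum_ne_zero hq
    exact (Finset.mem_filter.1 hp).2 ▸ hmem p
  · refine Subtype.ext (funext fun q => ?_)
    change prism f φ.1 1 q = φ.1 q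
    rw [prism_one f φ.nonneg φ.sum_eq_one]
    refine Finset.sum_eq_single q (fun p hp hpq => by_contra fun hp0 => hpq ?_) fun hq => ?_
    · exact (hfix p (hφC p hp0)).symm.trans (Finset.mem_filter.1 hp).2
    · exact by_contra fun hq0 =>
        hq (Finset.mem_filter.2 ⟨Finset.mem_univ q, hfix q (hφC q hq0)⟩)
  · exact Subtype.ext (prism_zero f φ.nonneg)

instance (G : MGraph) (l : Finset G.V) : Fintype (G.XP l) :=
  inferInstanceAs (Fintype {H : Finset G.E // _})

/-- For a finite labelled graph `(G,l)`, sending a subgraph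
`H ∈ X(G,l)` to its maximal core subgraph defines an order-preserving map from
`X(G,l)` to the poset `C(G,l)` of proper core subgraphs; it restricts to the
identity on core subgraphs, satisfies `f(H) ⊆ H`, and `f(H)` is the maximal
core subgraph of `H`. Consequently, the order complex of `X(G,l)` deformation
retracts to (the subspace corresponding to) the order complex of `C(G,l)`. -/
theorem maximal_core_retraction
    (G : MGraph) (l : Finset G.V) :
    ∃ f : G.XP l → G.XP l,
      Monotone f ∧
      (∀ H, (f H).1 ⊆ H.1) ∧
      (∀ H, G.IsCore l (f H).1) ∧
      (∀ H, G.IsCore l H.1 → f H = H) ∧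
      (∀ H, ∀ M : Finset G.E, M ⊆ H.1 → G.IsCore l M → M ⊆ (f H).1) ∧
      IsDeformationRetractOf
        {φ : AbsSC.realization (orderComplex (G.XP l)) |
          ∀ H : G.XP l, φ.1 H ≠ 0 → G.IsCore l H.1} := by
  have hcore (H : G.XP l) : G.IsCore l (G.maxCore l H.1) :=
    MGraph.isCore_maxCore (MGraph.exists_isCore_subset_of_inX H.2.2)
  let f (H : G.XP l) : G.XP l :=
    ⟨G.maxCore l H.1, (MGraph.maxCore_subset H.1).trans_ssubset H.2.1,
      MGraph.inX_of_isCore (hcore H)⟩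
  have hmono : Monotone f := fun _ _ h => MGraph.maxCore_mono h
  have hle (H : G.XP l) : f H ≤ H := MGraph.maxCore_subset H.1
  have hfix (H : G.XP l) (hH : G.IsCore l H.1) : f H = H :=
    Subtype.ext (MGraph.maxCore_eq_self hH)
  exact ⟨f, hmono, hle, hcore, hfix, fun _ _ hMH hM => MGraph.subset_maxCore hMH hM,
    isDeformationRetractOf_orderComplex_of_le_id hmono hle (C := {H | G.IsCore l H.1}) hcore hfix⟩
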